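/- arXiv:2007.02623 — 3 statements merged into one kernel-verified Lean document; each statement's English description precedes it below -/
import Mathlib

section
/- Let p be an odd prime, d an odd divisor of p-1, m = (p-1)/d, and χ an odd Dirichlet character mod p of order m. Then ((4d+1)p + d + 1)/12 ≤ A(p,d) ≤ ((5d+1)p + d + 1)/12, where A(p,d) = (1/(p-1))·Σ_{N=1}^{p-1} #{(n₁,n₂) : 1 ≤ n₁,n₂ ≤ N, χ(n₁) = χ(n₂)}. -/
/-!
Summing over `N` first, `(p - 1) A(p,d)` is the sum of `p - max(x, y)` over the pairs of
residues `1 ≤ x, y ≤ p - 1` with `χ(x) = χ(y)`, i.e. with `x / y` in the kernel of `χ`, a group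
of order `d`. If `z` is the representative of `x - y` in `[0, p)`, then
`2p max(x, y) = p(x + y + z) + (x - y)² - z²`; over these pairs `x`, `y` each run `d` times and
`z` runs `d - 1` times through `1, …, p - 1`, so
`p (p - 1) A(p,d) = (d + 1) p (p² - 1) / 12 + Σ xy`. The last sum is the sum of the squares of the
`m` fibre sums of `χ`; Cauchy–Schwarz across the fibres bounds it below, and `2xy ≤ x² + y²`
bounds it above.
-/

open scoped Classical

/-- Elma's character sum `A(p,d)`, attached to the character `χ`. -/
noncomputable def elmaSum (p : ℕ) (χ : DirichletCharacter ℂ p) : ℝ :=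
  (1 / ((p : ℝ) - 1)) * ∑ N ∈ Finset.Icc 1 (p - 1),
    ((Finset.filter (fun q : ℕ × ℕ => χ (q.1 : ZMod p) = χ (q.2 : ZMod p))
      ((Finset.Icc 1 N) ×ˢ (Finset.Icc 1 N))).card : ℝ)

open Finset

noncomputable def fiberPairs {α β : Type*} [Fintype α] (f : α → β) : Finset (α × α) :=
  {q | f q.1 = f q.2}

theorem fiberPairs_comp {α β γ : Type*} [Fintype α] (f : α → β) {g : β → γ}
    (hg : Function.Injective g) : fiberPairs (g ∘ f) = fiberPairs f := by
  ext q; simp [fiberPairs, hg.eq_iff]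

theorem sum_fiberPairs_mul_eq_sum_sq {α β : Type*} [Fintype α] (f : α → β) (g : α → ℝ) :
    ∑ q ∈ fiberPairs f, g q.1 * g q.2 = ∑ w ∈ univ.image f, (∑ a with f a = w, g a) ^ 2 := by
  calc ∑ q ∈ fiberPairs f, g q.1 * g q.2 = ∑ a, ∑ b with f b = f a, g a * g b := by
        rw [fiberPairs, sum_filter, Fintype.sum_prod_type]
        simp only [sum_filter, eq_comm]
    _ = ∑ w ∈ univ.image f, ∑ a with f a = w, ∑ b with f b = w, g a * g b := by
        rw [← sum_fiberwise_of_maps_to (fun a _ => mem_image_of_mem f (mem_univ a))]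
        refine sum_congr rfl fun w _ => sum_congr rfl fun a ha => ?_
        rw [(mem_filter.1 ha).2]
    _ = _ := by simp only [sq, sum_mul_sum]

theorem sq_sum_le_card_image_mul_sum_fiberPairs {α β : Type*} [Fintype α] (f : α → β)
    (g : α → ℝ) : (∑ a, g a) ^ 2 ≤ #(univ.image f) * ∑ q ∈ fiberPairs f, g q.1 * g q.2 := by
  rw [sum_fiberPairs_mul_eq_sum_sq,
    ← sum_fiberwise_of_maps_to (fun a _ => mem_image_of_mem f (mem_univ a)) g]
  exact sq_sum_le_card_mul_sum_sq

theorem sum_card_filter_Icc_prod (P : ℕ × ℕ → Prop) [DecidablePred P] (n : ℕ) :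
    ∑ N ∈ Icc 1 n, #{q ∈ Icc 1 N ×ˢ Icc 1 N | P q}
      = ∑ q ∈ Icc 1 n ×ˢ Icc 1 n with P q, (n + 1 - max q.1 q.2) := by
  have hN : ∀ N ∈ Icc 1 n, #{q ∈ Icc 1 N ×ˢ Icc 1 N | P q}
      = #{q ∈ {q ∈ Icc 1 n ×ˢ Icc 1 n | P q} | max q.1 q.2 ≤ N} := by
    intro N hN
    congr 1
    ext q
    simp only [mem_filter, mem_product, mem_Icc, max_le_iff] at hN ⊢
    by_cases hP : P q <;> simp only [hP, and_true, and_false, false_and]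
    omega
  have hq : ∀ q ∈ {q ∈ Icc 1 n ×ˢ Icc 1 n | P q}, #{N ∈ Icc 1 n | max q.1 q.2 ≤ N}
      = n + 1 - max q.1 q.2 := by
    intro q hq
    rw [← Nat.card_Icc]
    congr 1
    ext N
    simp only [mem_filter, mem_product, mem_Icc] at hq ⊢
    omega
  rw [sum_congr rfl hN]
  simp only [card_filter]
  rw [sum_comm]
  refine sum_congr rfl fun q hq' => ?_
  rw [← hq q hq', card_filter]

theorem Finset.sum_range_natCast (n : ℕ) : ∑ i ∈ range n, (i : ℝ) = n * (n - 1) / 2 := by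
  induction n with
  | zero => simp
  | succ k ih => rw [sum_range_succ, ih]; push_cast; ring

theorem Finset.sum_range_natCast_sq (n : ℕ) :
    ∑ i ∈ range n, (i : ℝ) ^ 2 = n * (n - 1) * (2 * n - 1) / 6 := by
  induction n with
  | zero => simp
  | succ k ih => rw [sum_range_succ, ih]; push_cast; ring

theorem Fintype.sum_units_eq_sum {F M : Type*} [GroupWithZero F] [Fintype F] [DecidableEq F]
    [AddCommMonoid M] (h : F → M) (h0 : h 0 = 0) : ∑ u : Fˣ, h u = ∑ x : F, h x := by
  have himage : univ.map ⟨((↑) : Fˣ → F), Units.val_injective⟩ = univ.erase 0 := by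
    ext x
    simp only [mem_map, mem_univ, Function.Embedding.coeFn_mk, true_and, mem_erase, ne_eq,
      and_true]
    exact isUnit_iff_ne_zero
  rw [← Finset.sum_erase univ h0, ← himage, Finset.sum_map]
  rfl

theorem MonoidHom.orderOf_eq_card_range {G H : Type*} [Group G] [IsCyclic G] [CommGroup H]
    (φ : G →* H) : orderOf φ = Nat.card φ.range := by
  obtain ⟨g, hg⟩ := IsCyclic.exists_generator (α := G)
  have hrange : φ.range = Subgroup.zpowers (φ g) := by
    rw [φ.range_eq_map, ← (Subgroup.zpowers g).eq_top_iff'.mpr hg, φ.map_zpowers]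
  rw [hrange, Nat.card_zpowers, orderOf_eq_orderOf_iff]
  intro n
  refine ⟨fun h => by simpa using DFunLike.congr_fun h g, fun h => ?_⟩
  ext x
  obtain ⟨k, rfl⟩ := Subgroup.mem_zpowers_iff.mp (hg x)
  rw [MonoidHom.pow_apply, MonoidHom.one_apply, map_zpow, ← zpow_natCast, ← zpow_mul, mul_comm,
    zpow_mul, zpow_natCast, h, one_zpow]

theorem MulChar.orderOf_toUnitHom {R R' : Type*} [CommMonoid R] [CommMonoidWithZero R']
    (χ : MulChar R R') : orderOf χ.toUnitHom = orderOf χ :=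
  MulChar.mulEquivToUnitHom.orderOf_eq χ

theorem MonoidHom.card_image_univ {G H : Type*} [Group G] [Fintype G] [Group H] (φ : G →* H) :
    #(univ.image φ) = Nat.card φ.range := by
  rw [← Set.toFinset_range, ← Set.ncard_eq_toFinset_card', ← Nat.card_coe_set_eq,
    ← MonoidHom.coe_range]
  rfl

section FiberPairs
variable {G H M : Type*} [Group G] [Fintype G] [Group H] [AddCommMonoid M] (φ : G →* H)

theorem mem_fiberPairs_iff_mul_inv_mem_ker {q : G × G} :
    q ∈ fiberPairs φ ↔ q.1 * q.2⁻¹ ∈ φ.ker := by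
  simp [fiberPairs, MonoidHom.mem_ker, mul_inv_eq_one]

theorem sum_fiberPairs_eq_sum_ker (F : G → G → M) :
    ∑ q ∈ fiberPairs φ, F q.1 q.2 = ∑ c : φ.ker, ∑ b : G, F (c * b) b := by
  rw [← Finset.sum_product']
  refine Finset.sum_bij'
    (fun q hq => (⟨q.1 * q.2⁻¹, (mem_fiberPairs_iff_mul_inv_mem_ker φ).1 hq⟩, q.2))
    (fun q _ => (q.1 * q.2, q.2)) (fun _ _ => mem_univ _) (fun q _ => ?_) (fun _ _ => by simp)
    (fun _ _ => by simp) (fun _ _ => by simp)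
  simp [mem_fiberPairs_iff_mul_inv_mem_ker]

theorem sum_fiberPairs_fst (g : G → M) :
    ∑ q ∈ fiberPairs φ, g q.1 = Nat.card φ.ker • ∑ b : G, g b := by
  rw [sum_fiberPairs_eq_sum_ker φ (fun a _ => g a)]
  calc ∑ c : φ.ker, ∑ b, g (c * b) = ∑ _c : φ.ker, ∑ b, g b :=
        Fintype.sum_congr _ _ fun c => Equiv.sum_comp (Equiv.mulLeft (c : G)) g
    _ = _ := by rw [sum_const, card_univ, Nat.card_eq_fintype_card]

theorem sum_fiberPairs_snd (g : G → M) :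
    ∑ q ∈ fiberPairs φ, g q.2 = Nat.card φ.ker • ∑ b : G, g b := by
  rw [sum_fiberPairs_eq_sum_ker φ (fun _ b => g b), sum_const, card_univ,
    Nat.card_eq_fintype_card]

theorem sum_fiberPairs_mul_le (g : G → ℝ) :
    ∑ q ∈ fiberPairs φ, g q.1 * g q.2 ≤ Nat.card φ.ker * ∑ b : G, g b ^ 2 := by
  have h := sum_le_sum fun q (_ : q ∈ fiberPairs φ) => two_mul_le_add_sq (g q.1) (g q.2)
  rw [sum_add_distrib, sum_fiberPairs_fst φ (g · ^ 2), sum_fiberPairs_snd φ (g · ^ 2),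
    nsmul_eq_mul] at h
  simp only [mul_assoc, ← mul_sum] at h
  linarith

end FiberPairs

theorem sum_fiberPairs_sub_add_sum_units {F H M : Type*} [DivisionRing F] [Fintype F]
    [DecidableEq F] [Group H] [AddCommMonoid M] (φ : Fˣ →* H) (h : F → M) (h0 : h 0 = 0) :
    ∑ q ∈ fiberPairs φ, h (q.1 - q.2 : F) + ∑ u : Fˣ, h u = Nat.card φ.ker • ∑ u : Fˣ, h u := by
  have hc : ∀ c : φ.ker, ∑ b : Fˣ, h ((c * b : Fˣ) - b : F)
      + (if c = 1 then ∑ u : Fˣ, h u else 0) = ∑ u : Fˣ, h u := by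
    intro c
    by_cases hc1 : c = 1
    · simp [hc1, h0]
    · have hc1' : ((c : Fˣ) : F) - 1 ≠ 0 :=
        sub_ne_zero.mpr fun hc1'' => hc1 (Subtype.ext (Units.ext hc1''))
      rw [if_neg hc1, add_zero]
      convert Equiv.sum_comp (Equiv.mulLeft (Units.mk0 _ hc1')) (fun u : Fˣ => h u) using 3
      simp [sub_mul]
  rw [sum_fiberPairs_eq_sum_ker φ (fun a b => h (a - b : F))]
  calc _ = ∑ c : φ.ker, (∑ b : Fˣ, h ((c * b : Fˣ) - b : F)
          + if c = 1 then ∑ u : Fˣ, h u else 0) := by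
        rw [sum_add_distrib, Fintype.sum_ite_eq']
    _ = _ := by rw [Fintype.sum_congr _ _ hc, sum_const, card_univ, Nat.card_eq_fintype_card]

namespace ZMod

theorem sum_val {p : ℕ} [NeZero p] {M : Type*} [AddCommMonoid M] (f : ℕ → M) :
    ∑ x : ZMod p, f x.val = ∑ i ∈ range p, f i :=
  Finset.sum_nbij' ZMod.val (↑) (fun x _ => mem_range.2 x.val_lt) (fun _ _ => mem_univ _)
    (fun x _ => ZMod.natCast_zmod_val x) (fun _ hi => ZMod.val_cast_of_lt (mem_range.1 hi))
    (fun _ _ => rfl)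

theorem two_mul_mul_max_val {p : ℕ} [NeZero p] (a b : ZMod p) :
    2 * p * max (a.val : ℝ) b.val
      = p * (a.val + b.val + (a - b).val) + ((a.val : ℝ) - b.val) ^ 2 - ((a - b).val : ℝ) ^ 2 := by
  have hmod := ZMod.val_add (a - b) b
  rw [sub_add_cancel] at hmod
  have hz := (a - b).val_lt
  have hy := b.val_lt
  have hdiv := Nat.mod_add_div ((a - b).val + b.val) p
  rw [← hmod] at hdiv
  -- `(a - b).val + b.val = a.val + p * carry`, and the carry is `0` exactly when `b.val ≤ a.val`
  have hq : ((a - b).val + b.val) / p < 2 := Nat.div_lt_of_lt_mul (by omega)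
  interval_cases hq' : ((a - b).val + b.val) / p
  · rw [max_eq_left (by exact_mod_cast (by omega : b.val ≤ a.val))]
    have : ((a - b).val : ℝ) + b.val = a.val := by
      exact_mod_cast (by omega : (a - b).val + b.val = a.val)
    rw [eq_sub_of_add_eq this]; ring
  · rw [max_eq_right (by exact_mod_cast (by omega : a.val ≤ b.val))]
    have : ((a - b).val : ℝ) + b.val = a.val + p := by
      exact_mod_cast (by omega : (a - b).val + b.val = a.val + p)
    rw [eq_sub_of_add_eq this]; ring

variable {p : ℕ} [Fact p.Prime]

theorem val_units_mem_Icc (u : (ZMod p)ˣ) : (u : ZMod p).val ∈ Icc 1 (p - 1) := by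
  have := (u : ZMod p).val_lt
  have : (u : ZMod p).val ≠ 0 := (ZMod.val_ne_zero _).2 u.ne_zero
  rw [mem_Icc]; omega

theorem exists_units_val_eq {n : ℕ} (hn : n ∈ Icc 1 (p - 1)) :
    ∃ u : (ZMod p)ˣ, (u : ZMod p).val = n := by
  rw [mem_Icc] at hn
  have hval : (n : ZMod p).val = n :=
    ZMod.val_cast_of_lt (by have := (Fact.out : p.Prime).pos; omega)
  refine ⟨Units.mk0 (n : ZMod p) fun h => ?_, hval⟩
  rw [h, ZMod.val_zero] at hval
  omega

theorem sum_filter_Icc_prod_eq_sum_fiberPairs {β M : Type*} [DecidableEq β] [AddCommMonoid M]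
    (f : ZMod p → β) (F : ℕ → ℕ → M) :
    ∑ q ∈ Icc 1 (p - 1) ×ˢ Icc 1 (p - 1) with f q.1 = f q.2, F q.1 q.2
      = ∑ q ∈ fiberPairs (fun u : (ZMod p)ˣ => f u), F (q.1 : ZMod p).val (q.2 : ZMod p).val := by
  symm
  refine sum_bij (fun q _ => ((q.1 : ZMod p).val, (q.2 : ZMod p).val)) (fun q hq => ?_)
    (fun q _ r _ h => ?_) (fun q hq => ?_) (fun _ _ => rfl)
  · simp only [fiberPairs, mem_filter, mem_univ, true_and] at hq
    exact mem_filter.2 ⟨mem_product.2 ⟨val_units_mem_Icc _, val_units_mem_Icc _⟩,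
      by simpa using hq⟩
  · simp only [Prod.mk.injEq] at h
    ext <;> [exact ZMod.val_injective _ h.1; exact ZMod.val_injective _ h.2]
  · simp only [mem_filter, mem_product] at hq
    obtain ⟨u, hu⟩ := exists_units_val_eq hq.1.1
    obtain ⟨v, hv⟩ := exists_units_val_eq hq.1.2
    refine ⟨(u, v), ?_, by simp [hu, hv]⟩
    simpa [fiberPairs, ← hu, ← hv] using hq.2

theorem sum_units_val : ∑ u : (ZMod p)ˣ, ((u : ZMod p).val : ℝ) = p * (p - 1) / 2 := by
  refine (Fintype.sum_units_eq_sum (fun x : ZMod p => (x.val : ℝ)) (by simp)).trans ?_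
  rw [sum_val (fun i => (i : ℝ)), sum_range_natCast]

theorem sum_units_val_sq :
    ∑ u : (ZMod p)ˣ, ((u : ZMod p).val : ℝ) ^ 2 = p * (p - 1) * (2 * p - 1) / 6 := by
  refine (Fintype.sum_units_eq_sum (fun x : ZMod p => (x.val : ℝ) ^ 2) (by simp)).trans ?_
  rw [sum_val (fun i => (i : ℝ) ^ 2), sum_range_natCast_sq]

variable {H : Type*} [Group H] (φ : (ZMod p)ˣ →* H)

theorem card_ker_mul_card_range : Nat.card φ.ker * Nat.card φ.range = p - 1 := by
  rw [← Subgroup.index_ker, Subgroup.card_mul_index, Nat.card_eq_fintype_card, ZMod.card_units]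

theorem two_mul_mul_sum_fiberPairs_max_val :
    2 * p * ∑ q ∈ fiberPairs φ, max ((q.1 : ZMod p).val : ℝ) (q.2 : ZMod p).val
      = (3 * Nat.card φ.ker - 1) * p * (p * (p - 1) / 2)
        + (Nat.card φ.ker + 1) * (p * (p - 1) * (2 * p - 1) / 6)
        - 2 * ∑ q ∈ fiberPairs φ, ((q.1 : ZMod p).val : ℝ) * (q.2 : ZMod p).val := by
  have hx := sum_fiberPairs_fst φ fun u => ((u : ZMod p).val : ℝ)
  have hy := sum_fiberPairs_snd φ fun u => ((u : ZMod p).val : ℝ)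
  have hz := sum_fiberPairs_sub_add_sum_units φ (fun x => (x.val : ℝ)) (by simp)
  have hx2 := sum_fiberPairs_fst φ fun u => ((u : ZMod p).val : ℝ) ^ 2
  have hy2 := sum_fiberPairs_snd φ fun u => ((u : ZMod p).val : ℝ) ^ 2
  have hz2 := sum_fiberPairs_sub_add_sum_units φ (fun x => (x.val : ℝ) ^ 2) (by simp)
  simp only [sum_units_val, sum_units_val_sq, nsmul_eq_mul] at hx hy hz hx2 hy2 hz2
  rw [mul_sum, sum_congr rfl fun q _ => two_mul_mul_max_val _ _]
  simp only [sub_sq, mul_add, sum_add_distrib, sum_sub_distrib, ← mul_sum, mul_assoc]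
  linear_combination (p : ℝ) * (hx + hy + hz) + hx2 + hy2 - hz2

theorem mul_sum_fiberPairs_sub_max_val :
    (p : ℝ) * ∑ q ∈ fiberPairs φ, ((p : ℝ) - max ((q.1 : ZMod p).val : ℝ) (q.2 : ZMod p).val)
      = (Nat.card φ.ker + 1) * p * (p ^ 2 - 1) / 12
        + ∑ q ∈ fiberPairs φ, ((q.1 : ZMod p).val : ℝ) * (q.2 : ZMod p).val := by
  have hcard := sum_fiberPairs_snd φ fun _ => (1 : ℝ)
  simp only [sum_const, card_univ, ZMod.card_units, nsmul_eq_mul, mul_one,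
    Nat.cast_pred (Fact.out : p.Prime).pos] at hcard
  rw [sum_sub_distrib, sum_const, nsmul_eq_mul]
  linear_combination (p : ℝ) ^ 2 * hcard - (1 / 2 : ℝ) * two_mul_mul_sum_fiberPairs_max_val φ

theorem card_ker_mul_le_sum_fiberPairs_mul :
    Nat.card φ.ker * (p : ℝ) ^ 2 * (p - 1) / 4
      ≤ ∑ q ∈ fiberPairs φ, ((q.1 : ZMod p).val : ℝ) * (q.2 : ZMod p).val := by
  have hCS := sq_sum_le_card_image_mul_sum_fiberPairs φ fun u => ((u : ZMod p).val : ℝ)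
  rw [sum_units_val, φ.card_image_univ] at hCS
  have hcard : (Nat.card φ.ker : ℝ) * Nat.card φ.range = p - 1 := by
    rw [← Nat.cast_mul, card_ker_mul_card_range, Nat.cast_pred (Fact.out : p.Prime).pos]
  have hp : (1 : ℝ) < p := by exact_mod_cast (Fact.out : p.Prime).one_lt
  refine le_of_mul_le_mul_left ?_ (sub_pos.mpr hp)
  calc ((p : ℝ) - 1) * (Nat.card φ.ker * (p : ℝ) ^ 2 * (p - 1) / 4)
      = Nat.card φ.ker * (p * (p - 1) / 2) ^ 2 := by ring
    _ ≤ Nat.card φ.ker * (Nat.card φ.range * ∑ q ∈ fiberPairs φ,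
          ((q.1 : ZMod p).val : ℝ) * (q.2 : ZMod p).val) :=
        mul_le_mul_of_nonneg_left hCS (Nat.cast_nonneg _)
    _ = _ := by rw [← mul_assoc, hcard]

theorem sum_fiberPairs_mul_val_le :
    ∑ q ∈ fiberPairs φ, ((q.1 : ZMod p).val : ℝ) * (q.2 : ZMod p).val
      ≤ Nat.card φ.ker * ((p : ℝ) * (p - 1) * (2 * p - 1) / 6) := by
  simpa only [sum_units_val_sq] using sum_fiberPairs_mul_le φ fun u => ((u : ZMod p).val : ℝ)

end ZMod

section ElmaSum
variable {p : ℕ} [Fact p.Prime] (χ : DirichletCharacter ℂ p)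

theorem elmaSum_eq_sum_fiberPairs : elmaSum p χ
    = (∑ q ∈ fiberPairs χ.toUnitHom, ((p : ℝ) - max ((q.1 : ZMod p).val : ℝ) (q.2 : ZMod p).val))
      / (p - 1) := by
  have hχ : (fun u : (ZMod p)ˣ => χ u) = Units.val ∘ χ.toUnitHom :=
    funext fun u => (χ.coe_toUnitHom u).symm
  rw [elmaSum, one_div_mul_eq_div, ← Nat.cast_sum, sum_card_filter_Icc_prod,
    ZMod.sum_filter_Icc_prod_eq_sum_fiberPairs χ fun a b => p - 1 + 1 - max a b, hχ,
    fiberPairs_comp _ Units.val_injective, Nat.cast_sum]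
  congr 1
  refine sum_congr rfl fun q _ => ?_
  have h1 := (Fact.out : p.Prime).one_le
  have h2 := ZMod.val_units_mem_Icc q.1
  have h3 := ZMod.val_units_mem_Icc q.2
  rw [mem_Icc] at h2 h3
  rw [Nat.sub_add_cancel h1, Nat.cast_sub (by omega), Nat.cast_max]

theorem le_elmaSum :
    ((4 * Nat.card χ.toUnitHom.ker + 1) * p + Nat.card χ.toUnitHom.ker + 1) / 12
      ≤ elmaSum p χ := by
  have hp : (1 : ℝ) < p := by exact_mod_cast (Fact.out : p.Prime).one_lt
  have hmain := ZMod.mul_sum_fiberPairs_sub_max_val χ.toUnitHom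
  have hSS := ZMod.card_ker_mul_le_sum_fiberPairs_mul χ.toUnitHom
  rw [elmaSum_eq_sum_fiberPairs, le_div_iff₀ (by linarith)]
  refine le_of_mul_le_mul_left ?_ (by linarith : (0 : ℝ) < p)
  linarith

theorem elmaSum_le :
    elmaSum p χ
      ≤ ((5 * Nat.card χ.toUnitHom.ker + 1) * p - Nat.card χ.toUnitHom.ker + 1) / 12 := by
  have hp : (1 : ℝ) < p := by exact_mod_cast (Fact.out : p.Prime).one_lt
  have hmain := ZMod.mul_sum_fiberPairs_sub_max_val χ.toUnitHom
  have hSS := ZMod.sum_fiberPairs_mul_val_le χ.toUnitHom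
  rw [elmaSum_eq_sum_fiberPairs, div_le_iff₀ (by linarith)]
  refine le_of_mul_le_mul_left ?_ (by linarith : (0 : ℝ) < p)
  linarith

end ElmaSum

theorem stmt3_general (p : ℕ) (hp : p.Prime) (d : ℕ)
    (hdvd : d ∣ p - 1) (m : ℕ) (hm : m = (p - 1) / d)
    (χ : DirichletCharacter ℂ p) (horder : orderOf χ = m) :
    ((4 * (d : ℝ) + 1) * p + d + 1) / 12 ≤ elmaSum p χ ∧
      elmaSum p χ ≤ ((5 * (d : ℝ) + 1) * p + d + 1) / 12 := by
  have := Fact.mk hp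
  have hker : Nat.card χ.toUnitHom.ker = d := by
    have hdm : d * m = p - 1 := hm ▸ Nat.mul_div_cancel' hdvd
    have h := ZMod.card_ker_mul_card_range χ.toUnitHom
    rw [← MonoidHom.orderOf_eq_card_range, χ.orderOf_toUnitHom, horder, ← hdm] at h
    exact Nat.eq_of_mul_eq_mul_right (horder ▸ χ.orderOf_pos) h
  have hlow := le_elmaSum χ
  have hupp := elmaSum_le χ
  rw [hker] at hlow hupp
  exact ⟨hlow, by linarith [(Nat.cast_nonneg d : (0 : ℝ) ≤ d)]⟩

theorem stmt3 (p : ℕ) [NeZero p] (hp : p.Prime) (hp2 : Odd p) (d : ℕ) (hd : Odd d)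
    (hdvd : d ∣ p - 1) (m : ℕ) (hm : m = (p - 1) / d)
    (χ : DirichletCharacter ℂ p) (hodd : χ (-1) = -1) (horder : orderOf χ = m) :
    ((4 * (d : ℝ) + 1) * p + d + 1) / 12 ≤ elmaSum p χ ∧
      elmaSum p χ ≤ ((5 * (d : ℝ) + 1) * p + d + 1) / 12 :=
  stmt3_general p hp d hdvd m hm χ horder
end

section
/- Let p be a prime and λ an element of order k ≥ 3 in the multiplicative group (ℤ/pℤ)*. If (h₁,h₂) ∈ ℤ² is a nonzero pair with h₁ + h₂λ ≡ 0 mod p, then max(|h₁|,|h₂|) ≥ p^{1/φ(k)}/√8, where φ is Euler's totient function. -/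
/-!
Let `R = Res(Φ_k, h₁ + h₂X) ∈ ℤ`. Reducing mod `p`, the two polynomials have the common root `λ`,
so `p ∣ R`. Over `ℂ`, `R = ∏ (h₁ + h₂μ)` over the primitive `k`-th roots of unity `μ`; these are
non-real for `k ≥ 3`, so no factor vanishes, while each factor has absolute value at most
`|h₁| + |h₂| ≤ 2 max(|h₁|, |h₂|)`. Hence `p ≤ |R| ≤ (2 max(|h₁|, |h₂|))^φ(k)`.

The resultant is taken with the sizes `φ(k)` and `1` fixed rather than the actual degrees, so that
it stays the homogeneous form above when `h₂ = 0`.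
-/

open Polynomial
open scoped Nat

namespace Polynomial

theorem resultant_eq_zero_of_isRoot {R : Type*} [CommRing R] {f g : R[X]} {m n : ℕ}
    (hf : f.natDegree ≤ m) (hg : g.natDegree ≤ n) (hmn : m ≠ 0 ∨ n ≠ 0) {a : R}
    (hfa : f.IsRoot a) (hga : g.IsRoot a) : resultant f g m n = 0 := by
  obtain ⟨u, v, -, -, huv⟩ := exists_mul_add_mul_eq_C_resultant f g hf hg hmn
  simpa [hfa.eq_zero, hga.eq_zero] using congrArg (eval a) huv.symm

theorem resultant_cyclotomic_eq_prod_primitiveRoots {K : Type*} [Field K] [IsAlgClosed K]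
    (k : ℕ) [NeZero (k : K)] {g : K[X]} {n : ℕ} (hg : g.natDegree ≤ n) :
    resultant (cyclotomic k K) g (φ k) n = ∏ μ ∈ primitiveRoots k K, g.eval μ := by
  rw [← natDegree_cyclotomic k K, resultant_eq_prod_eval _ _ _ hg (IsAlgClosed.splits _),
    (cyclotomic.monic k K).leadingCoeff, one_pow, one_mul, cyclotomic.roots_eq_primitiveRoots_val]
  rfl

end Polynomial

theorem IsPrimitiveRoot.le_two {R : Type*} [CommRing R] [LinearOrder R] [IsStrictOrderedRing R]
    {r : R} {k : ℕ} (h : IsPrimitiveRoot r k) : k ≤ 2 := by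
  rcases eq_or_ne k 0 with rfl | hk
  · omega
  have hr : r = 1 ∨ r = -1 := by
    rcases (pow_eq_one_iff_of_ne_zero hk).mp h.pow_eq_one with h1 | ⟨h1, -⟩ <;> simp [h1]
  exact Nat.le_of_dvd two_pos (h.dvd_of_pow_eq_one 2 (sq_eq_one_iff.mpr hr))

theorem IsPrimitiveRoot.im_ne_zero {μ : ℂ} {k : ℕ} (h : IsPrimitiveRoot μ k) (hk : 3 ≤ k) :
    μ.im ≠ 0 := by
  intro him
  have hμ : Complex.ofRealHom μ.re = μ := Complex.ext rfl (by simp [him])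
  rw [← hμ] at h
  have := (h.of_map_of_injective Complex.ofReal_injective).le_two
  omega

theorem IsPrimitiveRoot.mul_add_ne_zero {μ : ℂ} {k : ℕ} (h : IsPrimitiveRoot μ k) (hk : 3 ≤ k)
    {a b : ℝ} (hab : (a, b) ≠ (0, 0)) : (b : ℂ) * μ + a ≠ 0 := by
  intro h0
  rcases eq_or_ne b 0 with rfl | hb
  · exact hab (by simpa using h0)
  · simpa [hb, h.im_ne_zero hk] using congrArg Complex.im h0

theorem dvd_resultant_cyclotomic {p : ℕ} [Fact p.Prime] {k : ℕ} (hk : 0 < k) {l : ZMod p}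
    (hl : IsPrimitiveRoot l k) {a b : ℤ} (hab : (a : ZMod p) + b * l = 0) :
    (p : ℤ) ∣ resultant (cyclotomic k ℤ) (C b * X + C a) (φ k) 1 := by
  rw [← ZMod.intCast_zmod_eq_zero_iff_dvd, ← eq_intCast (Int.castRingHom (ZMod p)),
    ← resultant_map_map, map_cyclotomic, Polynomial.map_add, Polynomial.map_mul, map_C, map_C,
    map_X]
  refine resultant_eq_zero_of_isRoot (natDegree_cyclotomic k _).le natDegree_linear_le
    (Or.inr one_ne_zero) (hl.isRoot_cyclotomic hk) ?_
  simp only [IsRoot, eval_add, eval_mul, eval_C, eval_X, eq_intCast]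
  linear_combination hab

theorem intCast_resultant_cyclotomic (k : ℕ) [NeZero k] (a b : ℤ) :
    ((resultant (cyclotomic k ℤ) (C b * X + C a) (φ k) 1 : ℤ) : ℂ) =
      ∏ μ ∈ primitiveRoots k ℂ, ((b : ℂ) * μ + a) := by
  rw [← eq_intCast (Int.castRingHom ℂ), ← resultant_map_map, map_cyclotomic, Polynomial.map_add,
    Polynomial.map_mul, map_C, map_C, map_X,
    resultant_cyclotomic_eq_prod_primitiveRoots k natDegree_linear_le]
  simp

theorem resultant_cyclotomic_ne_zero {k : ℕ} (hk : 3 ≤ k) {a b : ℤ} (hab : (a, b) ≠ (0, 0)) :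
    resultant (cyclotomic k ℤ) (C b * X + C a) (φ k) 1 ≠ 0 := by
  have : NeZero k := ⟨by omega⟩
  rw [← Int.cast_ne_zero (α := ℂ), intCast_resultant_cyclotomic, Finset.prod_ne_zero_iff]
  intro μ hμ
  have hab' : ((a : ℝ), (b : ℝ)) ≠ (0, 0) := by simpa using hab
  simpa using (isPrimitiveRoot_of_mem_primitiveRoots hμ).mul_add_ne_zero hk hab'

theorem abs_resultant_cyclotomic_le {k : ℕ} (hk : k ≠ 0) (a b : ℤ) :
    |resultant (cyclotomic k ℤ) (C b * X + C a) (φ k) 1| ≤ (|a| + |b|) ^ φ k := by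
  have : NeZero k := ⟨hk⟩
  have hfactor : ∀ μ ∈ primitiveRoots k ℂ, ‖(b : ℂ) * μ + a‖ ≤ |(a : ℝ)| + |(b : ℝ)| := by
    intro μ hμ
    calc ‖(b : ℂ) * μ + a‖ ≤ ‖(b : ℂ) * μ‖ + ‖(a : ℂ)‖ := norm_add_le _ _
      _ = |(a : ℝ)| + |(b : ℝ)| := by
        rw [norm_mul, (isPrimitiveRoot_of_mem_primitiveRoots hμ).norm'_eq_one hk,
          Complex.norm_intCast, Complex.norm_intCast, mul_one, add_comm]
  suffices h : ‖((resultant (cyclotomic k ℤ) (C b * X + C a) (φ k) 1 : ℤ) : ℂ)‖ ≤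
      (|(a : ℝ)| + |(b : ℝ)|) ^ φ k by
    rw [Complex.norm_intCast] at h
    exact_mod_cast h
  calc _ = ∏ μ ∈ primitiveRoots k ℂ, ‖(b : ℂ) * μ + a‖ := by
        rw [intCast_resultant_cyclotomic, norm_prod]
    _ ≤ ∏ _μ ∈ primitiveRoots k ℂ, (|(a : ℝ)| + |(b : ℝ)|) :=
        Finset.prod_le_prod (fun _ _ ↦ norm_nonneg _) hfactor
    _ = (|(a : ℝ)| + |(b : ℝ)|) ^ φ k := by rw [Finset.prod_const, Complex.card_primitiveRoots]

theorem prime_le_pow_totient_of_add_mul_eq_zero {p : ℕ} [Fact p.Prime] {k : ℕ} (hk : 3 ≤ k)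
    {l : ZMod p} (hl : IsPrimitiveRoot l k) {a b : ℤ} (hab : (a, b) ≠ (0, 0))
    (habl : (a : ZMod p) + b * l = 0) : (p : ℤ) ≤ (|a| + |b|) ^ φ k :=
  (Int.le_of_dvd (abs_pos.mpr (resultant_cyclotomic_ne_zero hk hab))
    ((dvd_abs _ _).mpr (dvd_resultant_cyclotomic (by omega) hl habl))).trans
    (abs_resultant_cyclotomic_le (by omega) a b)

theorem stmt10 (p : ℕ) (hp : p.Prime) (lam : (ZMod p)ˣ) (k : ℕ)
    (hk : orderOf lam = k) (hk3 : 3 ≤ k) (h₁ h₂ : ℤ) (hne : (h₁, h₂) ≠ (0, 0))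
    (hcong : (h₁ : ZMod p) + (h₂ : ZMod p) * (lam : ZMod p) = 0) :
    (p : ℝ) ^ ((1 : ℝ) / (Nat.totient k)) / Real.sqrt 8 ≤ ((max |h₁| |h₂| : ℤ) : ℝ) := by
  have : Fact p.Prime := ⟨hp⟩
  have hl : IsPrimitiveRoot (lam : ZMod p) k := by
    simpa only [orderOf_units, hk] using IsPrimitiveRoot.orderOf (lam : ZMod p)
  have hsum : |h₁| + |h₂| ≤ 2 * max |h₁| |h₂| := by
    linarith [le_max_left |h₁| |h₂|, le_max_right |h₁| |h₂|]
  have hpH : (p : ℝ) ≤ (2 * ((max |h₁| |h₂| : ℤ) : ℝ)) ^ φ k := by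
    exact_mod_cast (prime_le_pow_totient_of_add_mul_eq_zero hk3 hl hne hcong).trans
      (pow_le_pow_left₀ (by positivity) hsum _)
  have hroot : (p : ℝ) ^ ((1 : ℝ) / φ k) ≤ 2 * ((max |h₁| |h₂| : ℤ) : ℝ) := by
    rw [one_div, Real.rpow_inv_le_iff_of_pos (by positivity) (by positivity)
      (by simpa using Nat.totient_pos.mpr (by omega : 0 < k)), Real.rpow_natCast]
    exact hpH
  calc (p : ℝ) ^ ((1 : ℝ) / φ k) / √8 ≤ 2 * ((max |h₁| |h₂| : ℤ) : ℝ) / 2 :=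
        div_le_div₀ (by positivity) hroot two_pos (Real.le_sqrt_of_sq_le (by norm_num))
    _ = ((max |h₁| |h₂| : ℤ) : ℝ) := by ring
end

section
/- Let p be an odd prime, d an odd divisor of p-1 with d > 1, m = (p-1)/d, and χ an odd character mod p of order m. If M(p,m) := (2/m)·Σ_{j=1}^{m/2}|L(1,χ^{2j-1})|² ≤ π²/6, then the relative class number satisfies h⁻_{p,d} ≤ 2·(p/24)^{m/4}. -/
/-! Since `d` is odd, `m = 2n` is even. By AM-GM the product of the `n` numbers
`‖L(1, χ^(2j+1))‖` is at most the `n`-th power of their quadratic mean `√M ≤ π / √6`,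
and `(√p / (2π)) · (π / √6) = √(p / 24)`. -/

open Finset

theorem Real.prod_le_arith_mean_pow {ι : Type*} (s : Finset ι) (z : ι → ℝ)
    (hz : ∀ i ∈ s, 0 ≤ z i) : ∏ i ∈ s, z i ≤ ((∑ i ∈ s, z i) / #s) ^ #s := by
  rcases s.eq_empty_or_nonempty with rfl | hs
  · simp
  have hcard : (0 : ℝ) < #s := by exact_mod_cast hs.card_pos
  have hgm := Real.geom_mean_le_arith_mean s (fun _ ↦ 1) z (fun _ _ ↦ zero_le_one)
    (by simpa using hcard) hz
  simp only [Real.rpow_one, one_mul, sum_const, nsmul_eq_mul, mul_one] at hgm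
  calc ∏ i ∈ s, z i = ((∏ i ∈ s, z i) ^ (#s : ℝ)⁻¹) ^ #s := by
        rw [← Real.rpow_natCast, ← Real.rpow_mul (prod_nonneg hz), inv_mul_cancel₀ hcard.ne',
          Real.rpow_one]
    _ ≤ ((∑ i ∈ s, z i) / #s) ^ #s := by gcongr; exact Real.rpow_nonneg (prod_nonneg hz) _

theorem Real.prod_le_sqrt_mean_sq_pow {ι : Type*} (s : Finset ι) (a : ι → ℝ) :
    ∏ i ∈ s, a i ≤ √((∑ i ∈ s, a i ^ 2) / #s) ^ #s := by
  refine le_of_sq_le_sq ?_ (by positivity)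
  rw [← pow_right_comm, Real.sq_sqrt (by positivity), ← prod_pow]
  exact Real.prod_le_arith_mean_pow s _ fun i _ ↦ sq_nonneg (a i)

theorem Nat.even_div_of_odd {a d : ℕ} (ha : Even a) (hd : Odd d) (hdvd : d ∣ a) :
    Even (a / d) := by
  rw [← Nat.mul_div_cancel' hdvd, Nat.even_mul] at ha
  exact ha.resolve_left (Nat.not_even_iff_odd.mpr hd)

theorem Real.sqrt_div_two_pi_mul_sqrt_pi_sq_div_six (x : ℝ) :
    √x / (2 * Real.pi) * √(Real.pi ^ 2 / 6) = √(x / 24) := by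
  have h24 : √(24 : ℝ) = 2 * √6 := by
    rw [show (24 : ℝ) = 2 ^ 2 * 6 by norm_num, Real.sqrt_mul (by norm_num),
      Real.sqrt_sq (by norm_num)]
  rw [Real.sqrt_div' _ (by norm_num : (0:ℝ) ≤ 6), Real.sqrt_sq Real.pi_pos.le,
    Real.sqrt_div' x (by norm_num : (0:ℝ) ≤ 24), h24]
  field_simp

theorem stmt19_general (p : ℕ) [NeZero p] (hp2 : Odd p) (d : ℕ) (hd : Odd d)
    (hdvd : d ∣ p - 1) (m : ℕ) (hm : m = (p - 1) / d)
    (χ : DirichletCharacter ℂ p)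
    (h : ℕ)
    (hrel : (h : ℝ) = 2 * ∏ j ∈ Finset.range (m / 2),
      (Real.sqrt p / (2 * Real.pi)) * ‖DirichletCharacter.LFunction (χ ^ (2 * j + 1)) 1‖)
    (hM : (2 / (m : ℝ)) * ∑ j ∈ Finset.range (m / 2),
        ‖DirichletCharacter.LFunction (χ ^ (2 * j + 1)) 1‖ ^ 2 ≤ Real.pi ^ 2 / 6) :
    (h : ℝ) ≤ 2 * ((p : ℝ) / 24) ^ ((m : ℝ) / 4) := by
  obtain ⟨n, hn⟩ : Even m := hm ▸ Nat.even_div_of_odd (Nat.Odd.sub_odd hp2 odd_one) hd hdvd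
  rw [show m / 2 = n by omega] at hrel hM
  set L : ℕ → ℝ := fun j ↦ ‖DirichletCharacter.LFunction (χ ^ (2 * j + 1)) 1‖
  have hmean : (∑ j ∈ range n, L j ^ 2) / n ≤ Real.pi ^ 2 / 6 := by
    convert hM using 1
    rw [hn]; push_cast; ring
  calc (h : ℝ) = 2 * ((√p / (2 * Real.pi)) ^ n * ∏ j ∈ range n, L j) := by
        rw [hrel, prod_mul_distrib, prod_const, card_range]
    _ ≤ 2 * ((√p / (2 * Real.pi)) ^ n * √(Real.pi ^ 2 / 6) ^ n) := by
        gcongr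
        refine (Real.prod_le_sqrt_mean_sq_pow _ L).trans ?_
        rw [card_range]
        exact pow_le_pow_left₀ (Real.sqrt_nonneg _) (Real.sqrt_le_sqrt hmean) n
    _ = 2 * ((p : ℝ) / 24) ^ ((m : ℝ) / 4) := by
        rw [← mul_pow, Real.sqrt_div_two_pi_mul_sqrt_pi_sq_div_six, Real.sqrt_eq_rpow,
          ← Real.rpow_natCast, ← Real.rpow_mul (by positivity), hn]
        push_cast
        ring_nf

theorem stmt19 (p : ℕ) [NeZero p] (hp : p.Prime) (hp2 : Odd p) (d : ℕ) (hd : Odd d)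
    (hd1 : 1 < d) (hdvd : d ∣ p - 1) (m : ℕ) (hm : m = (p - 1) / d)
    (χ : DirichletCharacter ℂ p) (hodd : χ (-1) = -1) (horder : orderOf χ = m)
    (h : ℕ)
    (hrel : (h : ℝ) = 2 * ∏ j ∈ Finset.range (m / 2),
      (Real.sqrt p / (2 * Real.pi)) * ‖DirichletCharacter.LFunction (χ ^ (2 * j + 1)) 1‖)
    (hM : (2 / (m : ℝ)) * ∑ j ∈ Finset.range (m / 2),
        ‖DirichletCharacter.LFunction (χ ^ (2 * j + 1)) 1‖ ^ 2 ≤ Real.pi ^ 2 / 6) :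
    (h : ℝ) ≤ 2 * ((p : ℝ) / 24) ^ ((m : ℝ) / 4) :=
  stmt19_general p hp2 d hd hdvd m hm χ h hrel hM
end
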